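/- Let P be an N×M hard assignment matrix with all clusters nonempty, let F be a real N×d matrix and Y a real N×c matrix. Set A = FᵀF and B = Fᵀ P (PᵀP)⁻² Pᵀ F, and let λ = λ_min(A) denote the smallest eigenvalue of A. Assume A and B are invertible with λ > 0, let m = max over k of the k-th diagonal entry of PᵀP (the maximum cluster size), and assume λ_min(B) ≥ λ / m². Define W = A⁻¹ Fᵀ Y and W' = B⁻¹ Fᵀ P (PᵀP)⁻² Pᵀ Y. Then ‖W − W'‖ ≤ C · m², where C = ‖F‖ · ‖Y‖ · (λ + ‖F‖) / λ². -/

import Mathlib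

open Matrix
open scoped Matrix.Norms.L2Operator

/-- A hard assignment matrix: entries in `{0,1}` with exactly one `1` per row. -/
def IsHardAssignment {N M : ℕ} (P : Matrix (Fin N) (Fin M) ℝ) : Prop :=
  (∀ i j, P i j = 0 ∨ P i j = 1) ∧ ∀ i, ∃! j, P i j = 1

/-- All clusters are nonempty: every column has at least one entry equal to `1`. -/
def ClustersNonempty {N M : ℕ} (P : Matrix (Fin N) (Fin M) ℝ) : Prop :=
  ∀ j, ∃ i, P i j = 1

/-- The smallest eigenvalue of a symmetric (Hermitian) real matrix. -/
noncomputable def lambdaMin {n : ℕ} {A : Matrix (Fin n) (Fin n) ℝ} (hA : A.IsHermitian) : ℝ :=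
  ⨅ i, hA.eigenvalues i

namespace ParamDistAux

open scoped InnerProductSpace

variable {n : ℕ}

lemma psd_shift {H : Matrix (Fin n) (Fin n) ℝ} (hH : H.IsHermitian)
    {μ : ℝ} (hμ : ∀ i, μ ≤ hH.eigenvalues i) :
    (H - μ • (1 : Matrix (Fin n) (Fin n) ℝ)).PosSemidef := by
  classical
  set U : Matrix (Fin n) (Fin n) ℝ := (hH.eigenvectorUnitary : Matrix (Fin n) (Fin n) ℝ) with hUdef
  have hU : U * star U = 1 := Matrix.mem_unitaryGroup_iff.mp hH.eigenvectorUnitary.2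
  have key : H - μ • 1 = U * diagonal (fun i => hH.eigenvalues i - μ) * star U := by
    have h1 : (diagonal (fun i => hH.eigenvalues i - μ) : Matrix (Fin n) (Fin n) ℝ)
        = diagonal (RCLike.ofReal ∘ hH.eigenvalues) - μ • 1 := by
      rw [smul_one_eq_diagonal, ← diagonal_sub]
      congr 1
    have hs := hH.spectral_theorem
    rw [Unitary.conjStarAlgAut_apply, ← hUdef] at hs
    rw [h1, mul_sub, sub_mul, ← hs, Matrix.mul_smul, Matrix.smul_mul, mul_one, hU]
  rw [key, Matrix.star_eq_conjTranspose]
  exact (Matrix.PosSemidef.diagonal (fun i => sub_nonneg.2 (hμ i))).mul_mul_conjTranspose_same U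

lemma rayleigh {H : Matrix (Fin n) (Fin n) ℝ} (hH : H.IsHermitian)
    {μ : ℝ} (hμ : ∀ i, μ ≤ hH.eigenvalues i) (x : Fin n → ℝ) :
    μ * (x ⬝ᵥ x) ≤ x ⬝ᵥ (H *ᵥ x) := by
  have h := (psd_shift hH hμ).dotProduct_mulVec_nonneg x
  simp only [star_trivial, sub_mulVec, dotProduct_sub, smul_mulVec, one_mulVec,
    dotProduct_smul, smul_eq_mul] at h
  linarith

lemma dot_eq_normsq (v : Fin n → ℝ) :
    v ⬝ᵥ v = ‖(WithLp.equiv 2 (Fin n → ℝ)).symm v‖ ^ 2 := by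
  rw [← real_inner_self_eq_norm_sq]; exact (EuclideanSpace.inner_toLp_toLp v v).symm

lemma dot_mulVec_le (H : Matrix (Fin n) (Fin n) ℝ) (x : Fin n → ℝ) :
    x ⬝ᵥ (H *ᵥ x) ≤ ‖H‖ * (x ⬝ᵥ x) := by
  set x' : EuclideanSpace ℝ (Fin n) := (WithLp.equiv 2 (Fin n → ℝ)).symm x with hx'
  have h1 : x ⬝ᵥ (H *ᵥ x) = ⟪x', (WithLp.equiv 2 (Fin n → ℝ)).symm (H *ᵥ x)⟫_ℝ := by
    rw [dotProduct_comm]; exact (EuclideanSpace.inner_toLp_toLp x (H *ᵥ x)).symm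
  have h2 : ⟪x', (WithLp.equiv 2 (Fin n → ℝ)).symm (H *ᵥ x)⟫_ℝ
      ≤ ‖x'‖ * ‖(WithLp.equiv 2 (Fin n → ℝ)).symm (H *ᵥ x)‖ := real_inner_le_norm _ _
  have h3 : ‖(WithLp.equiv 2 (Fin n → ℝ)).symm (H *ᵥ x)‖ ≤ ‖H‖ * ‖x'‖ :=
    H.l2_opNorm_mulVec x'
  have h4 : x ⬝ᵥ x = ‖x'‖ ^ 2 := dot_eq_normsq x
  have hn : (0:ℝ) ≤ ‖x'‖ := norm_nonneg _
  calc x ⬝ᵥ (H *ᵥ x) ≤ ‖x'‖ * (‖H‖ * ‖x'‖) := h1 ▸ (h2.trans (by nlinarith [hn, h3]))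
    _ = ‖H‖ * (x ⬝ᵥ x) := by rw [h4]; ring

lemma norm_inv_le {H : Matrix (Fin n) (Fin n) ℝ} (hH : H.IsHermitian) (hinv : IsUnit H)
    {μ : ℝ} (h0 : 0 < μ) (hμ : ∀ i, μ ≤ hH.eigenvalues i) : ‖H⁻¹‖ ≤ 1 / μ := by
  rw [Matrix.l2_opNorm_def]
  refine ContinuousLinearMap.opNorm_le_bound _ (by positivity) fun y => ?_
  set v : Fin n → ℝ := H⁻¹ *ᵥ (WithLp.equiv 2 (Fin n → ℝ)) y with hv
  have hgoal : ((Matrix.toEuclideanLin.trans LinearMap.toContinuousLinearMap) H⁻¹) y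
      = (WithLp.equiv 2 (Fin n → ℝ)).symm v := rfl
  rw [hgoal]
  have hHv : H *ᵥ v = (WithLp.equiv 2 (Fin n → ℝ)) y := by
    rw [hv, mulVec_mulVec, Matrix.mul_nonsing_inv _ ((Matrix.isUnit_iff_isUnit_det H).mp hinv),
      one_mulVec]
  set x' : EuclideanSpace ℝ (Fin n) := (WithLp.equiv 2 (Fin n → ℝ)).symm v with hx'
  have h1 := rayleigh hH hμ v
  have h2 : v ⬝ᵥ (H *ᵥ v) = ⟪x', y⟫_ℝ := by
    rw [hHv, hx']
    rw [EuclideanSpace.inner_eq_star_dotProduct, star_trivial]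
    exact dotProduct_comm _ _
  have h3 : ⟪x', y⟫_ℝ ≤ ‖x'‖ * ‖y‖ := real_inner_le_norm _ _
  have h4 : v ⬝ᵥ v = ‖x'‖ ^ 2 := dot_eq_normsq v
  have h5 : μ * ‖x'‖ ^ 2 ≤ ‖x'‖ * ‖y‖ := by rw [← h4]; linarith [h1.trans (h2.le.trans h3)]
  rcases eq_or_lt_of_le (norm_nonneg x') with h | h
  · rw [← h]; positivity
  · rw [one_div, inv_mul_eq_div, le_div_iff₀ h0]
    nlinarith [h5, h]

lemma norm_diag_le {w : Fin n → ℝ} {c : ℝ} (hc : 0 ≤ c) (h : ∀ k, |w k| ≤ c) :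
    ‖(diagonal w : Matrix (Fin n) (Fin n) ℝ)‖ ≤ c := by
  rw [Matrix.l2_opNorm_def]
  refine ContinuousLinearMap.opNorm_le_bound _ hc fun y => ?_
  have hgoal : ((Matrix.toEuclideanLin.trans LinearMap.toContinuousLinearMap) (diagonal w)) y
      = (WithLp.equiv 2 (Fin n → ℝ)).symm (diagonal w *ᵥ (WithLp.equiv 2 (Fin n → ℝ)) y) := rfl
  rw [hgoal]
  have hny : ‖y‖ = Real.sqrt (∑ i, (y i) ^ 2) := by
    rw [EuclideanSpace.norm_eq]
    congr 1
    refine Finset.sum_congr rfl fun i _ => ?_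
    rw [Real.norm_eq_abs, sq_abs]
  have hnz : ‖(WithLp.equiv 2 (Fin n → ℝ)).symm (diagonal w *ᵥ (WithLp.equiv 2 (Fin n → ℝ)) y)‖
      = Real.sqrt (∑ i, (w i * y i) ^ 2) := by
    rw [EuclideanSpace.norm_eq]
    congr 1
    refine Finset.sum_congr rfl fun i _ => ?_
    rw [Real.norm_eq_abs, sq_abs]
    congr 1
    exact congrArg (fun z => z) (Matrix.mulVec_diagonal w _ i)
  rw [hnz, hny]
  rw [← Real.sqrt_sq hc, ← Real.sqrt_mul (sq_nonneg c)]
  apply Real.sqrt_le_sqrt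
  rw [Finset.mul_sum]
  refine Finset.sum_le_sum fun i _ => ?_
  have hwi := h i
  have hw2 : w i ^ 2 ≤ c ^ 2 := by nlinarith [abs_nonneg (w i), sq_abs (w i)]
  nlinarith [sq_nonneg (y i), hw2]

lemma norm_transpose {a b : ℕ} (G : Matrix (Fin a) (Fin b) ℝ) : ‖Gᵀ‖ = ‖G‖ := by
  rw [← Matrix.conjTranspose_eq_transpose_of_trivial, Matrix.l2_opNorm_conjTranspose]

lemma norm_tmul {a b : ℕ} (G : Matrix (Fin a) (Fin b) ℝ) : ‖Gᵀ * G‖ = ‖G‖ * ‖G‖ := by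
  rw [← Matrix.conjTranspose_eq_transpose_of_trivial, Matrix.l2_opNorm_conjTranspose_mul_self]

end ParamDistAux

open ParamDistAux

set_option maxHeartbeats 1000000 in
/-- **Theorem: bound on the parameter distance.** For a hard assignment matrix `P`
with nonempty clusters, with `A = FᵀF`, `B = Fᵀ P (PᵀP)⁻² Pᵀ F` (both symmetric) invertible,
`λ = λ_min(A) > 0`, `m` the maximum cluster size (max diagonal entry of `PᵀP`), and
`λ_min(B) ≥ λ / m²`, the least-squares parameters `W = A⁻¹ Fᵀ Y` and
`W' = B⁻¹ Fᵀ P (PᵀP)⁻² Pᵀ Y` satisfy `‖W − W'‖ ≤ C · m²` where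
`C = ‖F‖ · ‖Y‖ · (λ + ‖F‖) / λ²` (L2 operator norm). -/
theorem parameter_distance_bound {N M d c : ℕ}
    (P : Matrix (Fin N) (Fin M) ℝ) (hP : IsHardAssignment P) (hPc : ClustersNonempty P)
    (F : Matrix (Fin N) (Fin d) ℝ) (Y : Matrix (Fin N) (Fin c) ℝ)
    (A B : Matrix (Fin d) (Fin d) ℝ)
    (hA : A = Fᵀ * F)
    (hB : B = Fᵀ * P * (Pᵀ * P)⁻¹ ^ 2 * Pᵀ * F)
    (hAh : A.IsHermitian) (hBh : B.IsHermitian)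
    (hAinv : IsUnit A) (hBinv : IsUnit B)
    (lam : ℝ) (hlam : lam = lambdaMin hAh) (hlam_pos : 0 < lam)
    (m : ℝ) (hm : m = ⨆ k, (Pᵀ * P) k k)
    (hBmin : lam / m ^ 2 ≤ lambdaMin hBh)
    (W W' : Matrix (Fin d) (Fin c) ℝ)
    (hW : W = A⁻¹ * Fᵀ * Y)
    (hW' : W' = B⁻¹ * (Fᵀ * P * (Pᵀ * P)⁻¹ ^ 2 * Pᵀ) * Y) :
    ‖W - W'‖ ≤ ‖F‖ * ‖Y‖ * (lam + ‖F‖) / lam ^ 2 * m ^ 2 := by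
  classical
  -- d ≥ 1
  have hd : 0 < d := by
    by_contra h
    push_neg at h
    have hd0 : d = 0 := Nat.le_zero.mp h
    subst hd0
    rw [hlam, lambdaMin, Real.iInf_of_isEmpty] at hlam_pos
    exact lt_irrefl _ hlam_pos
  haveI : Nonempty (Fin d) := ⟨⟨0, hd⟩⟩
  -- N ≥ 1
  have hN : 0 < N := by
    by_contra h
    push_neg at h
    have hN0 : N = 0 := Nat.le_zero.mp h
    subst hN0
    have hA0 : A = 0 := by
      rw [hA]; ext i j; simp [Matrix.mul_apply]
    rw [hA0] at hAinv
    have hdet := (Matrix.isUnit_iff_isUnit_det _).mp hAinv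
    rw [Matrix.det_zero] at hdet
    simp at hdet
  haveI : Nonempty (Fin N) := ⟨⟨0, hN⟩⟩
  have hM : 0 < M := by
    obtain ⟨j, _, _⟩ := hP.2 ⟨0, hN⟩
    exact lt_of_le_of_lt (Nat.zero_le _) j.2
  haveI : Nonempty (Fin M) := ⟨⟨0, hM⟩⟩
  -- cluster sizes
  set dvec : Fin M → ℝ := fun k => (Pᵀ * P) k k with hdvec
  have hent : ∀ i j, P i j = 0 ∨ P i j = 1 := hP.1
  have hDdiag : Pᵀ * P = diagonal dvec := by
    ext k l
    by_cases hkl : k = l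
    · subst hkl; rw [Matrix.diagonal_apply_eq]
    · rw [Matrix.diagonal_apply_ne _ hkl]
      rw [Matrix.mul_apply]
      refine Finset.sum_eq_zero fun i _ => ?_
      rcases hent i k with h1 | h1
      · simp [Matrix.transpose_apply, h1]
      · rcases hent i l with h2 | h2
        · simp [Matrix.transpose_apply, h2]
        · obtain ⟨j0, hj0, huniq⟩ := hP.2 i
          exact absurd ((huniq k h1).trans (huniq l h2).symm) hkl
  have hdval : ∀ k, dvec k = ∑ i, P i k * P i k := by
    intro k; rw [hdvec]; simp [Matrix.mul_apply, Matrix.transpose_apply]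
  have hd1 : ∀ k, 1 ≤ dvec k := by
    intro k
    obtain ⟨i0, hi0⟩ := hPc k
    rw [hdval k]
    calc (1:ℝ) = P i0 k * P i0 k := by rw [hi0]; ring
      _ ≤ ∑ i, P i k * P i k := by
        refine Finset.single_le_sum (f := fun i => P i k * P i k) (fun i _ => ?_) (Finset.mem_univ i0)
        rcases hent i k with h1 | h1 <;> simp [h1]
  have hdm : ∀ k, dvec k ≤ m := by
    intro k
    rw [hm]
    exact le_ciSup (Set.Finite.bddAbove (Set.finite_range _)) k
  have hm1 : 1 ≤ m := (hd1 (Classical.arbitrary _)).trans (hdm _)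
  -- cluster sizes are naturals
  have hnat : ∀ k, ∃ q : ℕ, dvec k = (q : ℝ) := by
    intro k
    refine ⟨(Finset.univ.filter (fun i => P i k = 1)).card, ?_⟩
    rw [hdval k]
    rw [Finset.card_filter, Nat.cast_sum]
    refine Finset.sum_congr rfl fun i _ => ?_
    rcases hent i k with h1 | h1 <;> simp [h1]
  -- m is attained
  obtain ⟨k0, hk0⟩ := Finite.exists_max dvec
  have hmeq : m = dvec k0 := by
    rw [hm]
    exact le_antisymm (ciSup_le hk0) (le_ciSup (Set.Finite.bddAbove (Set.finite_range _)) k0)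
  have hm_cases : m = 1 ∨ 2 ≤ m := by
    obtain ⟨q, hq⟩ := hnat k0
    rw [hmeq, hq]
    rw [hmeq, hq] at hm1
    have hq1 : 1 ≤ q := by exact_mod_cast hm1
    rcases Nat.lt_or_ge q 2 with h | h
    · left; have : q = 1 := by omega
      rw [this]; norm_num
    · right; exact_mod_cast h
  -- eigenvalue bounds
  have hAeig : ∀ i, lam ≤ hAh.eigenvalues i := fun i =>
    hlam ▸ ciInf_le (Set.Finite.bddBelow (Set.finite_range _)) i
  rcases hm_cases with hm_one | hm_two
  · -- m = 1 : W = W'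
    have hdall : ∀ k, dvec k = 1 := fun k => le_antisymm (hm_one ▸ hdm k) (hd1 k)
    have hD1 : Pᵀ * P = 1 := by
      rw [hDdiag]
      have : dvec = fun _ => 1 := funext hdall
      rw [this, Matrix.diagonal_one]
    have hPPT : P * Pᵀ = 1 := by
      ext i i'
      by_cases hii : i = i'
      · subst hii
        rw [Matrix.one_apply_eq, Matrix.mul_apply]
        obtain ⟨j0, hj0, huniq⟩ := hP.2 i
        rw [Finset.sum_eq_single j0]
        · simp [Matrix.transpose_apply, hj0]
        · intro k _ hk
          rcases hent i k with h1 | h1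
          · simp [Matrix.transpose_apply, h1]
          · exact absurd (huniq k h1) hk
        · intro h; exact absurd (Finset.mem_univ j0) h
      · rw [Matrix.one_apply_ne hii, Matrix.mul_apply]
        refine Finset.sum_eq_zero fun k _ => ?_
        simp only [Matrix.transpose_apply]
        rcases hent i k with h1 | h1
        · simp [h1]
        · rcases hent i' k with h2 | h2
          · simp [h2]
          · exfalso
            have hle : (2:ℝ) ≤ dvec k := by
              rw [hdval k]
              have hsub : ({i, i'} : Finset (Fin N)) ⊆ Finset.univ := Finset.subset_univ _
              have hsum : ∑ r ∈ ({i, i'} : Finset (Fin N)), P r k * P r k = 2 := by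
                rw [Finset.sum_pair hii, h1, h2]; ring
              calc (2:ℝ) = ∑ r ∈ ({i, i'} : Finset (Fin N)), P r k * P r k := hsum.symm
                _ ≤ ∑ r, P r k * P r k := by
                  refine Finset.sum_le_sum_of_subset_of_nonneg hsub fun r _ _ => ?_
                  rcases hent r k with h3 | h3 <;> simp [h3]
            rw [hdall k] at hle; linarith
    have hBA : B = A := by
      rw [hB, hD1, inv_one, one_pow, Matrix.mul_one, Matrix.mul_assoc Fᵀ P Pᵀ, hPPT, Matrix.mul_one, hA]
    have hWW : W' = W := by
      rw [hW', hW, hBA, hD1, inv_one, one_pow, Matrix.mul_one, Matrix.mul_assoc Fᵀ P Pᵀ, hPPT, Matrix.mul_one]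
    rw [hWW, sub_self, norm_zero]
    have h1 : (0:ℝ) ≤ lam + ‖F‖ := by linarith [norm_nonneg F]
    have h2 : (0:ℝ) ≤ ‖F‖ * ‖Y‖ * (lam + ‖F‖) :=
      mul_nonneg (mul_nonneg (norm_nonneg F) (norm_nonneg Y)) h1
    exact mul_nonneg (div_nonneg h2 (sq_nonneg lam)) (sq_nonneg m)
  · -- main case : 2 ≤ m
    set s := Real.sqrt lam with hs_def
    have hs : 0 < s := Real.sqrt_pos.2 hlam_pos
    have hs2 : s ^ 2 = lam := Real.sq_sqrt hlam_pos.le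
    have hdpos : ∀ k, (0:ℝ) < dvec k := fun k => lt_of_lt_of_le one_pos (hd1 k)
    set w : Fin M → ℝ := fun k => (dvec k)⁻¹ with hw
    have hDinv : (Pᵀ * P)⁻¹ = diagonal w := by
      apply Matrix.inv_eq_right_inv
      rw [hDdiag, Matrix.diagonal_mul_diagonal]
      rw [show (fun i => dvec i * w i) = fun _ : Fin M => (1:ℝ) from
        funext fun k => mul_inv_cancel₀ (hdpos k).ne', Matrix.diagonal_one]
    have hDdet : IsUnit (Pᵀ * P).det := by
      rw [hDdiag, Matrix.det_diagonal]
      exact isUnit_iff_ne_zero.mpr (Finset.prod_ne_zero_iff.mpr fun k _ => (hdpos k).ne')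
    obtain ⟨R, hR⟩ : ∃ R : Matrix (Fin M) (Fin N) ℝ, R = (Pᵀ * P)⁻¹ * Pᵀ := ⟨_, rfl⟩
    obtain ⟨X, hX⟩ : ∃ X : Matrix (Fin M) (Fin d) ℝ, X = R * F := ⟨_, rfl⟩
    have hDsymm : (Pᵀ * P)ᵀ = Pᵀ * P := by rw [Matrix.transpose_mul, Matrix.transpose_transpose]
    have hDinvsymm : ((Pᵀ * P)⁻¹)ᵀ = (Pᵀ * P)⁻¹ := by rw [Matrix.transpose_nonsing_inv, hDsymm]
    have hRT : Rᵀ = P * (Pᵀ * P)⁻¹ := by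
      rw [hR, Matrix.transpose_mul, hDinvsymm, Matrix.transpose_transpose]
    have hQ : Fᵀ * P * (Pᵀ * P)⁻¹ ^ 2 * Pᵀ = Xᵀ * R := by
      rw [hX, Matrix.transpose_mul, hRT, hR, pow_two]
      simp only [Matrix.mul_assoc]
    have hBX : B = Xᵀ * X := by
      rw [hB, hQ, Matrix.mul_assoc, ← hX]
    -- inverse norm bounds
    have hAnormInv : ‖A⁻¹‖ ≤ 1 / lam := norm_inv_le hAh hAinv hlam_pos hAeig
    have hmpos : (0:ℝ) < m := lt_of_lt_of_le one_pos hm1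
    have hBeig : ∀ i, lam / m ^ 2 ≤ hBh.eigenvalues i := fun i =>
      hBmin.trans (show lambdaMin hBh ≤ _ from
        ciInf_le (Set.Finite.bddBelow (Set.finite_range _)) i)
    have hBnormInv : ‖B⁻¹‖ ≤ m ^ 2 / lam := by
      have h := norm_inv_le hBh hBinv (div_pos hlam_pos (by positivity)) hBeig
      rwa [one_div_div] at h
    -- transpose symmetries
    have hAt : Aᵀ = A := by
      rw [← Matrix.conjTranspose_eq_transpose_of_trivial]; exact hAh
    have hBt : Bᵀ = B := by
      rw [← Matrix.conjTranspose_eq_transpose_of_trivial]; exact hBh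
    have hAinvT : (A⁻¹)ᵀ = A⁻¹ := by rw [Matrix.transpose_nonsing_inv, hAt]
    have hBinvT : (B⁻¹)ᵀ = B⁻¹ := by rw [Matrix.transpose_nonsing_inv, hBt]
    have hAdet := (Matrix.isUnit_iff_isUnit_det A).mp hAinv
    have hBdet := (Matrix.isUnit_iff_isUnit_det B).mp hBinv
    have hFA : ‖F * A⁻¹‖ * ‖F * A⁻¹‖ = ‖A⁻¹‖ := by
      rw [← norm_tmul (F * A⁻¹)]
      congr 1
      rw [Matrix.transpose_mul, hAinvT, Matrix.mul_assoc (A⁻¹) Fᵀ (F * A⁻¹),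
        ← Matrix.mul_assoc Fᵀ F (A⁻¹), ← hA, Matrix.mul_nonsing_inv A hAdet, Matrix.mul_one]
    have hXB : ‖X * B⁻¹‖ * ‖X * B⁻¹‖ = ‖B⁻¹‖ := by
      rw [← norm_tmul (X * B⁻¹)]
      congr 1
      rw [Matrix.transpose_mul, hBinvT, Matrix.mul_assoc (B⁻¹) Xᵀ (X * B⁻¹),
        ← Matrix.mul_assoc Xᵀ X (B⁻¹), ← hBX, Matrix.mul_nonsing_inv B hBdet, Matrix.mul_one]
    -- ‖R‖ ≤ 1
    have hwbound : ∀ k, |w k| ≤ 1 := by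
      intro k
      rw [hw, abs_of_pos (inv_pos.2 (hdpos k))]
      exact inv_le_one_of_one_le₀ (hd1 k)
    have hRRt : R * Rᵀ = (Pᵀ * P)⁻¹ := by
      rw [hRT, hR, Matrix.mul_assoc, ← Matrix.mul_assoc Pᵀ P ((Pᵀ * P)⁻¹),
        Matrix.mul_nonsing_inv _ hDdet, Matrix.mul_one]
    have hRnorm : ‖R‖ ≤ 1 := by
      have h2 : ‖R‖ * ‖R‖ = ‖R * Rᵀ‖ := by
        have h3 := norm_tmul Rᵀ
        rw [Matrix.transpose_transpose, ParamDistAux.norm_transpose] at h3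
        exact h3.symm
      have h4 : ‖R‖ * ‖R‖ ≤ 1 := by
        rw [h2, hRRt, hDinv]
        exact norm_diag_le zero_le_one hwbound
      nlinarith [norm_nonneg R]
    -- bounds on the two factors
    have hAFle : ‖A⁻¹ * Fᵀ‖ ≤ 1 / s := by
      have he : (F * A⁻¹)ᵀ = A⁻¹ * Fᵀ := by rw [Matrix.transpose_mul F A⁻¹, hAinvT]
      rw [← he, ParamDistAux.norm_transpose]
      have hb : ‖F * A⁻¹‖ ^ 2 ≤ 1 / lam := by rw [pow_two, hFA]; exact hAnormInv
      have hse : (1:ℝ)/s = Real.sqrt (1/lam) := by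
        rw [one_div, one_div, Real.sqrt_inv, hs_def]
      rw [hse]
      exact (Real.le_sqrt (norm_nonneg _) (by positivity)).mpr hb
    have hXBle : ‖B⁻¹ * Xᵀ‖ ≤ m / s := by
      have he : (X * B⁻¹)ᵀ = B⁻¹ * Xᵀ := by rw [Matrix.transpose_mul X B⁻¹, hBinvT]
      rw [← he, ParamDistAux.norm_transpose]
      have hb : ‖X * B⁻¹‖ ^ 2 ≤ m ^ 2 / lam := by rw [pow_two, hXB]; exact hBnormInv
      have hse : m/s = Real.sqrt (m ^ 2/lam) := by
        rw [Real.sqrt_div (sq_nonneg m), Real.sqrt_sq hmpos.le, hs_def]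
      rw [hse]
      exact (Real.le_sqrt (norm_nonneg _) (by positivity)).mpr hb
    have hWn : ‖W‖ ≤ 1 / s * ‖Y‖ := by
      rw [hW]
      calc ‖A⁻¹ * Fᵀ * Y‖ ≤ ‖A⁻¹ * Fᵀ‖ * ‖Y‖ := Matrix.l2_opNorm_mul _ _
        _ ≤ 1 / s * ‖Y‖ := mul_le_mul_of_nonneg_right hAFle (norm_nonneg Y)
    have hW'n : ‖W'‖ ≤ m / s * ‖Y‖ := by
      rw [hW', hQ]
      calc ‖B⁻¹ * (Xᵀ * R) * Y‖ ≤ ‖B⁻¹ * (Xᵀ * R)‖ * ‖Y‖ := Matrix.l2_opNorm_mul _ _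
        _ ≤ m / s * ‖Y‖ := by
          refine mul_le_mul_of_nonneg_right ?_ (norm_nonneg Y)
          rw [← Matrix.mul_assoc]
          calc ‖B⁻¹ * Xᵀ * R‖ ≤ ‖B⁻¹ * Xᵀ‖ * ‖R‖ := Matrix.l2_opNorm_mul _ _
            _ ≤ m / s * 1 := mul_le_mul hXBle hRnorm (norm_nonneg R) (div_nonneg hmpos.le hs.le)
            _ = m / s := mul_one _
    -- s ≤ ‖F‖
    have hlamA : lam ≤ ‖A‖ := by
      set i0 := Classical.arbitrary (Fin d)
      have hxx : (Pi.single i0 (1:ℝ)) ⬝ᵥ (Pi.single i0 (1:ℝ)) = 1 := by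
        simp [dotProduct, Pi.single_apply]
      have h1 := rayleigh hAh hAeig (Pi.single i0 (1:ℝ))
      have h2 := dot_mulVec_le A (Pi.single i0 (1:ℝ))
      rw [hxx] at h1 h2
      linarith
    have hsF : s ≤ ‖F‖ := by
      have h5 : ‖A‖ = ‖F‖ * ‖F‖ := by rw [hA]; exact norm_tmul F
      have hlamF2 : lam ≤ ‖F‖ ^ 2 := by rw [pow_two, ← h5]; exact hlamA
      calc s ≤ Real.sqrt (‖F‖ ^ 2) := Real.sqrt_le_sqrt hlamF2
        _ = ‖F‖ := Real.sqrt_sq (norm_nonneg F)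
    -- final arithmetic
    have htri : ‖W - W'‖ ≤ 1 / s * ‖Y‖ + m / s * ‖Y‖ :=
      (norm_sub_le W W').trans (add_le_add hWn hW'n)
    refine htri.trans ?_
    have hYn : (0:ℝ) ≤ ‖Y‖ := norm_nonneg Y
    rw [← hs2]
    have hrw : ‖F‖ * ‖Y‖ * (s ^ 2 + ‖F‖) / (s ^ 2) ^ 2 * m ^ 2
        = (‖F‖ * (s ^ 2 + ‖F‖) * m ^ 2) / (s ^ 2) ^ 2 * ‖Y‖ := by ring
    rw [hrw]
    have hkey : 1 / s + m / s ≤ (‖F‖ * (s ^ 2 + ‖F‖) * m ^ 2) / (s ^ 2) ^ 2 := by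
      rw [← add_div, div_le_div_iff₀ hs (pow_pos (pow_pos hs 2) 2)]
      have h1 : 1 + m ≤ m ^ 2 := by nlinarith
      have h3 : s * (s ^ 2 + s) ≤ ‖F‖ * (s ^ 2 + ‖F‖) :=
        mul_le_mul hsF (by linarith) (by nlinarith [hs]) (le_trans hs.le hsF)
      calc (1 + m) * (s ^ 2) ^ 2 ≤ m ^ 2 * (s ^ 2) ^ 2 :=
            mul_le_mul_of_nonneg_right h1 (by positivity)
        _ ≤ m ^ 2 * (s * (s ^ 2 + s) * s) := by
            refine mul_le_mul_of_nonneg_left ?_ (sq_nonneg m)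
            nlinarith [hs, pow_pos hs 3]
        _ ≤ m ^ 2 * (‖F‖ * (s ^ 2 + ‖F‖) * s) := by
            refine mul_le_mul_of_nonneg_left ?_ (sq_nonneg m)
            exact mul_le_mul_of_nonneg_right h3 hs.le
        _ = ‖F‖ * (s ^ 2 + ‖F‖) * m ^ 2 * s := by ring
    calc 1 / s * ‖Y‖ + m / s * ‖Y‖ = (1 / s + m / s) * ‖Y‖ := by ring
      _ ≤ _ := mul_le_mul_of_nonneg_right hkey hYn
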